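/- Let u, v be two vertices of a simple connected graph G of order n, and let v₁, v₂, …, v_s (1 ≤ s ≤ d(v)) be vertices in N_G(v) \ N_G(u), each different from u. Let G′ = G − vv₁ − vv₂ − ⋯ − vv_s + uv₁ + uv₂ + ⋯ + uv_s, and let f be a harmonic eigenfunction associated with ρ(𝓛(G)). If f(u) = f(v), then ρ(𝓛(G)) ≤ ρ(𝓛(G′)). -/

import Mathlib

open Matrix Finset BigOperators

namespace NLap

variable {V : Type} [Fintype V] [DecidableEq V]

/-- The normalized Laplacian matrix `𝓛(G) = D^{-1/2} (D - A) D^{-1/2}` of a simple graph. -/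
noncomputable def normLap (G : SimpleGraph V) [DecidableRel G.Adj] : Matrix V V ℝ :=
  Matrix.diagonal (fun v => (Real.sqrt (G.degree v : ℝ))⁻¹) * G.lapMatrix ℝ *
    Matrix.diagonal (fun v => (Real.sqrt (G.degree v : ℝ))⁻¹)

/-- The `k`-th smallest eigenvalue (1-indexed, counted with multiplicity) of a real matrix:
the `k`-th element of the sorted multiset of roots of its characteristic polynomial. -/
noncomputable def nthEig (M : Matrix V V ℝ) (k : ℕ) : ℝ :=
  (M.charpoly.roots.sort (· ≤ ·)).getD (k - 1) 0

/-- `λ₂(G)`, the second smallest normalized Laplacian eigenvalue. -/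
noncomputable def lambda2 (G : SimpleGraph V) [DecidableRel G.Adj] : ℝ :=
  nthEig (normLap G) 2

/-- `ρ(𝓛(G)) = λ_n(G)`, the normalized Laplacian spectral radius. -/
noncomputable def rhoL (G : SimpleGraph V) [DecidableRel G.Adj] : ℝ :=
  nthEig (normLap G) (Fintype.card V)

/-- `f` is a harmonic eigenfunction associated with the eigenvalue `lam` of `𝓛(G)`:
`f ≠ 0` and `L f = lam • D f`. -/
def IsHarmonic (G : SimpleGraph V) [DecidableRel G.Adj] (lam : ℝ) (f : V → ℝ) : Prop :=
  f ≠ 0 ∧ G.lapMatrix ℝ *ᵥ f = fun v => lam * ((G.degree v : ℝ) * f v)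

/-- `∑_{uv ∈ E(G)} (f(u) - f(v))²`. -/
noncomputable def edgeSum (G : SimpleGraph V) [DecidableRel G.Adj] (f : V → ℝ) : ℝ :=
  ∑ e ∈ G.edgeFinset, Sym2.lift ⟨fun u v => (f u - f v) ^ 2, fun u v => by ring⟩ e


/-- The graph obtained from `G` by subdividing the edge `uv`:
delete `uv`, add a new vertex `w = Sum.inr ()` and the edges `uw`, `wv`. -/
def subdivide {V : Type} (G : SimpleGraph V) (u v : V) : SimpleGraph (V ⊕ Unit) where
  Adj x y :=
    match x, y with
    | Sum.inl a, Sum.inl b => G.Adj a b ∧ ¬(a = u ∧ b = v) ∧ ¬(a = v ∧ b = u)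
    | Sum.inl a, Sum.inr _ => a = u ∨ a = v
    | Sum.inr _, Sum.inl b => b = u ∨ b = v
    | Sum.inr _, Sum.inr _ => False
  symm := by
    constructor
    rintro (a | a) (b | b) h
    · exact ⟨h.1.symm, fun hc => h.2.2 ⟨hc.2, hc.1⟩, fun hc => h.2.1 ⟨hc.2, hc.1⟩⟩
    · exact h
    · exact h
    · exact h
  loopless := by
    constructor
    rintro (a | a) h
    · exact G.loopless.irrefl a h.1
    · exact h

instance {V : Type} [DecidableEq V] (G : SimpleGraph V) [DecidableRel G.Adj] (u v : V) :
    DecidableRel (subdivide G u v).Adj := fun x y => by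
  rcases x with a | a <;> rcases y with b | b
  · exact inferInstanceAs (Decidable (G.Adj a b ∧ ¬(a = u ∧ b = v) ∧ ¬(a = v ∧ b = u)))
  · exact inferInstanceAs (Decidable (a = u ∨ a = v))
  · exact inferInstanceAs (Decidable (b = u ∨ b = v))
  · exact inferInstanceAs (Decidable False)

/-- `IsSubdivisionOf H G` : `H` is obtained from `G` (up to isomorphism) by repeatedly
subdividing edges. -/
inductive IsSubdivisionOf : {V W : Type} → SimpleGraph W → SimpleGraph V → Prop
  | iso {V W : Type} {G : SimpleGraph V} {H : SimpleGraph W} :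
      Nonempty (G ≃g H) → IsSubdivisionOf H G
  | step {V W : Type} {G : SimpleGraph V} {H : SimpleGraph W} (u v : V) :
      G.Adj u v → IsSubdivisionOf H (subdivide G u v) → IsSubdivisionOf H G

/-- The graph obtained from `G₁` and `G₂` by identifying `u ∈ V(G₁)` with `v ∈ V(G₂)`;
the merged vertex is `Sum.inl u`. -/
def glue {V₁ V₂ : Type} (G₁ : SimpleGraph V₁) (G₂ : SimpleGraph V₂) (u : V₁) (v : V₂) :
    SimpleGraph (V₁ ⊕ {y : V₂ // y ≠ v}) where
  Adj x y :=
    match x, y with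
    | Sum.inl a, Sum.inl b => G₁.Adj a b
    | Sum.inl a, Sum.inr b => a = u ∧ G₂.Adj v b.1
    | Sum.inr a, Sum.inl b => b = u ∧ G₂.Adj v a.1
    | Sum.inr a, Sum.inr b => G₂.Adj a.1 b.1
  symm := by
    constructor
    rintro (a | a) (b | b) h
    · exact h.symm
    · exact h
    · exact h
    · exact h.symm
  loopless := by
    constructor
    rintro (a | a) h
    · exact G₁.loopless.irrefl a h
    · exact G₂.loopless.irrefl a.1 h

instance {V₁ V₂ : Type} [DecidableEq V₁] (G₁ : SimpleGraph V₁) (G₂ : SimpleGraph V₂)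
    [DecidableRel G₁.Adj] [DecidableRel G₂.Adj] (u : V₁) (v : V₂) :
    DecidableRel (glue G₁ G₂ u v).Adj := fun x y => by
  rcases x with a | a <;> rcases y with b | b
  · exact inferInstanceAs (Decidable (G₁.Adj a b))
  · exact inferInstanceAs (Decidable (a = u ∧ G₂.Adj v b.1))
  · exact inferInstanceAs (Decidable (b = u ∧ G₂.Adj v a.1))
  · exact inferInstanceAs (Decidable (G₂.Adj a.1 b.1))

/-- The graph `G - vv₁ - ⋯ - vvₛ + uv₁ + ⋯ + uvₛ`, where `S = {v₁, …, vₛ}`. -/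
def shiftEdges {V : Type} [DecidableEq V] (G : SimpleGraph V) (u v : V) (S : Finset V) :
    SimpleGraph V where
  Adj x y := x ≠ y ∧
    ((G.Adj x y ∧ ¬(x = v ∧ y ∈ S) ∧ ¬(y = v ∧ x ∈ S)) ∨ (x = u ∧ y ∈ S) ∨ (y = u ∧ x ∈ S))
  symm := by
    constructor
    rintro x y ⟨hxy, h⟩
    refine ⟨hxy.symm, ?_⟩
    rcases h with h | h | h
    · exact Or.inl ⟨h.1.symm, h.2.2, h.2.1⟩
    · exact Or.inr (Or.inr h)
    · exact Or.inr (Or.inl h)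
  loopless := ⟨fun x h => h.1 rfl⟩

instance {V : Type} [DecidableEq V] (G : SimpleGraph V) [DecidableRel G.Adj] (u v : V)
    (S : Finset V) : DecidableRel (shiftEdges G u v S).Adj := fun x y =>
  inferInstanceAs (Decidable (_ ∧ _))

/-- The star on `n + 1` vertices, with center `none`. -/
def starGraph (n : ℕ) : SimpleGraph (Option (Fin n)) where
  Adj i j := (i = none ∧ j ≠ none) ∨ (j = none ∧ i ≠ none)
  symm := by
    constructor
    rintro i j (h | h)
    · exact Or.inr h
    · exact Or.inl h
  loopless := by
    constructor
    rintro i (h | h) <;> exact h.2 h.1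

instance (n : ℕ) : DecidableRel (starGraph n).Adj := fun i j =>
  inferInstanceAs (Decidable (_ ∨ _))

end NLap

/-!
Test the Rayleigh quotient of `𝓛(G')` on `g = D(G')^{1/2} f`. Since `f(u) = f(v)`, moving the
edges `vvᵢ` to `uvᵢ` changes neither `∑_{ij ∈ E} (f(i) - f(j))²` nor `∑ₓ d(x) f(x)²`, so the
quotient equals the Rayleigh quotient of `f` for `G`, which is `ρ(𝓛(G))` because `f` is harmonic;
connectivity makes its denominator `∑ₓ d(x) f(x)²` positive.
-/

open Matrix

namespace NLap

section AdjSum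

variable {V : Type} [Fintype V] (G H : SimpleGraph V) [DecidableRel G.Adj] [DecidableRel H.Adj]

/-- Every edge is counted twice, once in each direction. -/
def adjSum (w : V → V → ℝ) : ℝ := ∑ i, ∑ j, if G.Adj i j then w i j else 0

variable {G H}

theorem adjSum_congr (h : ∀ i j, G.Adj i j ↔ H.Adj i j) (w : V → V → ℝ) :
    adjSum G w = adjSum H w :=
  Finset.sum_congr rfl fun i _ => Finset.sum_congr rfl fun j _ => if_congr (h i j) rfl rfl

theorem adjSum_congr_right {w w' : V → V → ℝ} (h : ∀ i j, G.Adj i j → w i j = w' i j) :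
    adjSum G w = adjSum G w' :=
  Finset.sum_congr rfl fun i _ => Finset.sum_congr rfl fun j _ => by
    split_ifs with hij
    exacts [h i j hij, rfl]

theorem adjSum_sup (h : Disjoint G H) (w : V → V → ℝ) :
    adjSum (G ⊔ H) w = adjSum G w + adjSum H w := by
  simp only [adjSum, ← Finset.sum_add_distrib]
  refine Finset.sum_congr rfl fun i _ => Finset.sum_congr rfl fun j _ => ?_
  by_cases hG : G.Adj i j
  · simp [hG, SimpleGraph.disjoint_left.mp h i j hG]
  · simp [hG]

theorem adjSum_sdiff (h : H ≤ G) (w : V → V → ℝ) :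
    adjSum (G \ H) w = adjSum G w - adjSum H w := by
  rw [eq_sub_iff_add_eq, ← adjSum_sup disjoint_sdiff_self_left]
  exact adjSum_congr (fun i j => by rw [sdiff_sup_cancel h]) w

theorem sum_degree_mul_eq_adjSum (h : V → ℝ) :
    ∑ i, (G.degree i : ℝ) * h i = adjSum G fun i _ => h i := by
  refine Finset.sum_congr rfl fun i _ => ?_
  rw [G.degree_eq_sum_if_adj (R := ℝ), Finset.sum_mul]
  exact Finset.sum_congr rfl fun j _ => by split_ifs <;> simp

theorem dotProduct_lapMatrix_mulVec [DecidableEq V] (x : V → ℝ) :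
    x ⬝ᵥ (G.lapMatrix ℝ *ᵥ x) = adjSum G (fun i j => (x i - x j) ^ 2) / 2 := by
  rw [← toLinearMap₂'_apply', SimpleGraph.lapMatrix_toLinearMap₂', adjSum]

theorem sum_degree_mul_sq_pos [Nontrivial V] (hG : G.Connected) {f : V → ℝ} (hf : f ≠ 0) :
    0 < ∑ x, (G.degree x : ℝ) * f x ^ 2 := by
  obtain ⟨x, hx⟩ := Function.ne_iff.mp hf
  refine Finset.sum_pos' (fun x _ => by positivity) ⟨x, Finset.mem_univ x, ?_⟩
  have hdeg : (0 : ℝ) < G.degree x := by exact_mod_cast hG.preconnected.degree_pos_of_nontrivial x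
  have hx : f x ≠ 0 := hx
  positivity

end AdjSum

section Star

variable {V : Type}

def starTo (a : V) (S : Finset V) : SimpleGraph V :=
  SimpleGraph.fromRel fun i j => i = a ∧ j ∈ S

instance [DecidableEq V] (a : V) (S : Finset V) : DecidableRel (starTo a S).Adj :=
  inferInstanceAs (DecidableRel (SimpleGraph.fromRel fun i j => i = a ∧ j ∈ S).Adj)

theorem shiftEdges_adj_iff [DecidableEq V] (G : SimpleGraph V) (u v : V) (S : Finset V) (i j : V) :
    (shiftEdges G u v S).Adj i j ↔ ((G \ starTo v S) ⊔ starTo u S).Adj i j := by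
  by_cases hij : i = j
  · simp [hij, shiftEdges]
  · simp only [shiftEdges, starTo, SimpleGraph.sup_adj, SimpleGraph.sdiff_adj,
      SimpleGraph.fromRel_adj, ne_eq, hij, not_false_eq_true, true_and]
    tauto

end Star

variable {V : Type} [Fintype V] [DecidableEq V]

theorem adjSum_starTo {a : V} {S : Finset V} (ha : a ∉ S) (w : V → V → ℝ) :
    adjSum (starTo a S) w = ∑ x ∈ S, (w a x + w x a) := by
  have hsplit : ∀ i j, (if (starTo a S).Adj i j then w i j else 0) =
      (if i = a ∧ j ∈ S then w i j else 0) + (if j = a ∧ i ∈ S then w i j else 0) := by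
    intro i j
    by_cases hi : i = a <;> by_cases hj : j = a <;> simp_all [starTo, eq_comm (a := a)]
  simp only [adjSum, hsplit, Finset.sum_add_distrib, ite_and]
  simp [Finset.sum_ite_mem]

theorem adjSum_shiftEdges (G : SimpleGraph V) [DecidableRel G.Adj] {u v : V} {S : Finset V}
    (hSv : ∀ x ∈ S, G.Adj v x) (hSu : ∀ x ∈ S, ¬ G.Adj u x) (hu : u ∉ S)
    {w : V → V → ℝ} (hw : ∀ x ∈ S, w u x + w x u = w v x + w x v) :
    adjSum (shiftEdges G u v S) w = adjSum G w := by
  have hv : v ∉ S := fun hvS => G.loopless.irrefl v (hSv v hvS)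
  have hle : starTo v S ≤ G := by
    rintro i j ⟨-, ⟨rfl, hj⟩ | ⟨rfl, hi⟩⟩
    · exact hSv j hj
    · exact (hSv i hi).symm
  have hdisj : Disjoint (G \ starTo v S) (starTo u S) := by
    rw [SimpleGraph.disjoint_left]
    rintro i j ⟨hij, -⟩ ⟨-, ⟨rfl, hj⟩ | ⟨rfl, hi⟩⟩
    · exact hSu j hj hij
    · exact hSu i hi hij.symm
  rw [adjSum_congr (shiftEdges_adj_iff G u v S), adjSum_sup hdisj, adjSum_sdiff hle,
    adjSum_starTo hu, adjSum_starTo hv, Finset.sum_congr rfl hw, sub_add_cancel]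

theorem _root_.Matrix.IsHermitian.eigenvalues_le_nthEig_card {M : Matrix V V ℝ}
    (hM : M.IsHermitian) (i : V) : hM.eigenvalues i ≤ nthEig M (Fintype.card V) := by
  have hroots : M.charpoly.roots = Finset.univ.val.map hM.eigenvalues := by
    simpa using hM.roots_charpoly_eq_eigenvalues
  set l := M.charpoly.roots.sort (· ≤ ·)
  have hmem : hM.eigenvalues i ∈ l := by simp [l, hroots]
  have hlen : l.length = Fintype.card V := by simp [l, hroots]
  rw [nthEig, ← hlen, List.getD_eq_getElem _ _ (by grind), ← List.getLast_eq_getElem]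
  exact (M.charpoly.roots.pairwise_sort (· ≤ ·)).rel_getLast hmem

theorem _root_.Matrix.IsHermitian.dotProduct_mulVec_le_of_eigenvalues_le {M : Matrix V V ℝ}
    (hM : M.IsHermitian) {m : ℝ} (hm : ∀ i, hM.eigenvalues i ≤ m) (g : V → ℝ) :
    g ⬝ᵥ (M *ᵥ g) ≤ m * (g ⬝ᵥ g) := by
  have hpsd : (m • 1 - M).PosSemidef := by
    have hdiag : (diagonal fun i => m - hM.eigenvalues i).PosSemidef :=
      posSemidef_diagonal_iff.mpr fun i => sub_nonneg.mpr (hm i)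
    convert hdiag.mul_mul_conjTranspose_same (hM.eigenvectorUnitary : Matrix V V ℝ) using 1
    conv_lhs => rw [hM.spectral_theorem]
    have hUU : (hM.eigenvectorUnitary : Matrix V V ℝ) * (hM.eigenvectorUnitary : Matrix V V ℝ)ᴴ
        = 1 := mem_unitaryGroup_iff.mp hM.eigenvectorUnitary.prop
    have hsub : (diagonal fun i => m - hM.eigenvalues i) = m • 1 - diagonal hM.eigenvalues := by
      ext i j
      by_cases h : i = j <;> simp [diagonal, h, one_apply]
    rw [hsub, mul_sub, sub_mul, Matrix.mul_smul, mul_one, Matrix.smul_mul, hUU]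
    simp [star_eq_conjTranspose]
  simpa only [star_trivial, sub_mulVec, smul_mulVec, one_mulVec, dotProduct_sub, dotProduct_smul,
    smul_eq_mul, sub_nonneg] using hpsd.dotProduct_mulVec_nonneg g

section NormLap

variable (G : SimpleGraph V) [DecidableRel G.Adj]

theorem isHermitian_normLap : (normLap G).IsHermitian := by
  rw [normLap, IsHermitian, conjTranspose_mul, conjTranspose_mul, (isHermitian_diagonal _).eq,
    (G.isHermitian_lapMatrix ℝ).eq, Matrix.mul_assoc]

theorem dotProduct_normLap_mulVec (f : V → ℝ) :
    (diagonal (fun x => √(G.degree x : ℝ)) *ᵥ f) ⬝ᵥ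
        (normLap G *ᵥ (diagonal (fun x => √(G.degree x : ℝ)) *ᵥ f)) =
      adjSum G (fun i j => (f i - f j) ^ 2) / 2 := by
  -- `f'` is `f` with its values at isolated vertices replaced by `0` (as `(√0)⁻¹ = 0`).
  set f' : V → ℝ := fun x => (√(G.degree x : ℝ))⁻¹ * (√(G.degree x : ℝ) * f x)
  have hf' : ∀ x, 0 < G.degree x → f' x = f x := fun x hx => by
    simp only [f']
    rw [inv_mul_cancel_left₀ (Real.sqrt_pos.mpr (by exact_mod_cast hx)).ne']
  have hmul : normLap G *ᵥ (diagonal (fun x => √(G.degree x : ℝ)) *ᵥ f) =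
      diagonal (fun x => (√(G.degree x : ℝ))⁻¹) *ᵥ (G.lapMatrix ℝ *ᵥ f') := by
    simp only [normLap, ← mulVec_mulVec]
    congr 2
    ext x
    simp [mulVec_diagonal, f']
  have hconj : (diagonal (fun x => √(G.degree x : ℝ)) *ᵥ f) ⬝ᵥ
      (normLap G *ᵥ (diagonal (fun x => √(G.degree x : ℝ)) *ᵥ f)) =
        f' ⬝ᵥ (G.lapMatrix ℝ *ᵥ f') := by
    simp only [hmul, mulVec_diagonal, dotProduct, f']
    exact Finset.sum_congr rfl fun x _ => by ring
  rw [hconj, dotProduct_lapMatrix_mulVec]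
  congr 1
  exact adjSum_congr_right fun i j hij => by
    rw [hf' i hij.degree_pos_left, hf' j hij.degree_pos_right]

theorem dotProduct_sqrt_degree_mulVec_self (f : V → ℝ) :
    (diagonal (fun x => √(G.degree x : ℝ)) *ᵥ f) ⬝ᵥ
        (diagonal (fun x => √(G.degree x : ℝ)) *ᵥ f) =
      ∑ x, (G.degree x : ℝ) * f x ^ 2 := by
  simp only [mulVec_diagonal, dotProduct]
  exact Finset.sum_congr rfl fun x _ => by
    linear_combination f x ^ 2 * Real.mul_self_sqrt (Nat.cast_nonneg (α := ℝ) (G.degree x))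

theorem adjSum_sq_sub_le_rhoL_mul (f : V → ℝ) :
    adjSum G (fun i j => (f i - f j) ^ 2) / 2 ≤ rhoL G * ∑ x, (G.degree x : ℝ) * f x ^ 2 := by
  have h := (isHermitian_normLap G).dotProduct_mulVec_le_of_eigenvalues_le
    (isHermitian_normLap G).eigenvalues_le_nthEig_card
    (diagonal (fun x => √(G.degree x : ℝ)) *ᵥ f)
  rwa [dotProduct_normLap_mulVec, dotProduct_sqrt_degree_mulVec_self] at h

end NormLap

theorem IsHarmonic.adjSum_eq {G : SimpleGraph V} [DecidableRel G.Adj] {lam : ℝ} {f : V → ℝ}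
    (hf : IsHarmonic G lam f) :
    adjSum G (fun i j => (f i - f j) ^ 2) / 2 = lam * ∑ x, (G.degree x : ℝ) * f x ^ 2 := by
  rw [← dotProduct_lapMatrix_mulVec, hf.2, dotProduct, Finset.mul_sum]
  exact Finset.sum_congr rfl fun x _ => by ring

theorem stmt16_general {V : Type} [Fintype V] [DecidableEq V] (G : SimpleGraph V) [DecidableRel G.Adj]
    (hG : G.Connected) (u v : V) (huv : u ≠ v) (S : Finset V)
    (hSv : ∀ x ∈ S, G.Adj v x) (hSu : ∀ x ∈ S, ¬ G.Adj u x) (hu : u ∉ S)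
    (f : V → ℝ) (hf : IsHarmonic G (rhoL G) f)
    (hfuv : f u = f v) :
    rhoL G ≤ rhoL (shiftEdges G u v S) := by
  have : Nontrivial V := ⟨u, v, huv⟩
  have hedges : adjSum (shiftEdges G u v S) (fun i j => (f i - f j) ^ 2) =
      adjSum G (fun i j => (f i - f j) ^ 2) :=
    adjSum_shiftEdges G hSv hSu hu fun x _ => by rw [hfuv]
  have hdegrees : ∑ x, ((shiftEdges G u v S).degree x : ℝ) * f x ^ 2 =
      ∑ x, (G.degree x : ℝ) * f x ^ 2 := by
    simp only [sum_degree_mul_eq_adjSum]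
    exact adjSum_shiftEdges G hSv hSu hu fun x _ => by rw [hfuv]
  have hrayleigh := adjSum_sq_sub_le_rhoL_mul (shiftEdges G u v S) f
  rw [hedges, hdegrees, hf.adjSum_eq] at hrayleigh
  exact le_of_mul_le_mul_right hrayleigh (sum_degree_mul_sq_pos hG hf.1)

/-- Theorem 4.3: let `S = {v₁, …, vₛ}` (`1 ≤ s ≤ d(v)`) consist of neighbours of `v` that are
neither neighbours of `u` nor equal to `u`, and let
`G' = G - vv₁ - ⋯ - vvₛ + uv₁ + ⋯ + uvₛ`. If `f` is a harmonic eigenfunction associated with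
`ρ(𝓛(G))` and `f(u) = f(v)`, then `ρ(𝓛(G)) ≤ ρ(𝓛(G'))`. -/
theorem stmt16 {V : Type} [Fintype V] [DecidableEq V] (G : SimpleGraph V) [DecidableRel G.Adj]
    (hG : G.Connected) (u v : V) (huv : u ≠ v) (S : Finset V) (hS : S.Nonempty)
    (hSv : ∀ x ∈ S, G.Adj v x) (hSu : ∀ x ∈ S, ¬ G.Adj u x) (hu : u ∉ S)
    (hcard : S.card ≤ G.degree v) (f : V → ℝ) (hf : IsHarmonic G (rhoL G) f)
    (hfuv : f u = f v) :
    rhoL G ≤ rhoL (shiftEdges G u v S) :=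
  stmt16_general G hG u v huv S hSv hSu hu f hf hfuv

end NLap
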